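/- Let $f \in \mathbb{C}_{\mathcal{A}}[T_{\mathbb{C}}]$ be written as $f = \frac{\sum_{w} \lambda_w e_w}{\prod_{y} (1 - e_y)^{\varepsilon(y)}}$ with finitely many nonzero $\lambda_w$, where $e_y(v) = e^{2\pi i y(v)}$. Suppose the linear parts $\{y^\circ : \varepsilon(y) \neq 0\}$ span $V^*$ and $\mu + w$ lies in the open zonotope $D_\varepsilon = \{\sum_y \nu(y)\varepsilon(y) y^\circ : 0 < \nu(y) < 1\}$ for every $w$ with $\lambda_w \neq 0$. Then for every $u \in V_{\mathbb{R}}$ not a pole of $f$ and every nonzero $v \in V_{\mathbb{R}}$, $\lim_{s \to +\infty} e_\mu(\sqrt{-1}(u + s v))\, f(\sqrt{-1}(u + s v)) = 0$. -/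

import Mathlib

/-! Along the line `s ↦ √-1 (u + s v)` the exponentials become real: `e_t = exp (-2π t(u + s v))`,
and `e_y` is `e_{y°}` times the constant `β = e^{2πic}`. Writing `μ + w = ∑ ν_j ε_j y_j°` turns the `w`-term `λ_w e_μ e_w / ∏ (1 - e_{y_j})^{ε_j}` into
`λ_w ∏ (e_{ν_j y_j°} / (1 - e_{y_j}))^{ε_j}`. With `x = -2π y°(u + s v)` a factor reads
`exp (ν x) / (1 - β exp x)`, which tends to `0` as `x → ±∞` because `0 < ν < 1`, and is constant
when `y°(v) = 0`. As the `y°` with `ε ≠ 0` span, one of them has `y°(v) ≠ 0`, so every term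
tends to `0`. -/

open Finset
open scoped Real

/- `V = ℂⁿ` with real form `ℝⁿ`; the affine forms `y_j` have real linear parts given by
vectors `a j ∈ ℝⁿ` and complex constants `cst j`, with `e_y(z) = e^{2πi(∑ a_j i z_i + c_j)}`;
`w` ranges over a finite family of lattice vectors in `ℝⁿ`. -/

noncomputable section

/-- `e_t(z) = e^{2πi ∑ tᵢ zᵢ}` for a real covector `t` and `z ∈ ℂⁿ`. -/
def eLin {n : ℕ} (t : Fin n → ℝ) (z : Fin n → ℂ) : ℂ :=
  Complex.exp (2 * (π : ℂ) * Complex.I * ∑ i, (t i : ℂ) * z i)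

/-- `e_y(z) = e^{2πi(∑ aᵢ zᵢ + c)}` for an affine form with real linear part `a` and
constant `c`. -/
def eAff {n : ℕ} (a : Fin n → ℝ) (c : ℂ) (z : Fin n → ℂ) : ℂ :=
  Complex.exp (2 * (π : ℂ) * Complex.I * ((∑ i, (a i : ℂ) * z i) + c))

end

open Filter Topology

theorem eAff_eq_eLin_mul {n : ℕ} (a : Fin n → ℝ) (c : ℂ) (z : Fin n → ℂ) :
    eAff a c z = eLin a z * Complex.exp (2 * π * Complex.I * c) := by
  rw [eAff, eLin, ← Complex.exp_add, mul_add]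

theorem eLin_I_mul {n : ℕ} (t r : Fin n → ℝ) :
    eLin t (fun i => Complex.I * r i) = Real.exp (-(2 * π * (t ⬝ᵥ r))) := by
  rw [eLin, Complex.ofReal_exp]
  congr 1
  simp only [dotProduct, mul_sum]
  push_cast
  rw [neg_eq_neg_one_mul, mul_sum]
  refine sum_congr rfl fun i _ => ?_
  linear_combination (2 * π * t i * r i : ℂ) * Complex.I_mul_I

theorem eAff_I_mul {n : ℕ} (a r : Fin n → ℝ) (c : ℂ) :
    eAff a c (fun i => Complex.I * r i) =
      Complex.exp (2 * π * Complex.I * c) * Real.exp (-(2 * π * (a ⬝ᵥ r))) := by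
  rw [eAff_eq_eLin_mul, eLin_I_mul, mul_comm]

theorem eLin_mul_eLin_div_prod_eq_prod {n : ℕ} {ι : Type*} [Fintype ι] (a : ι → Fin n → ℝ)
    (c : ι → ℂ) (ε : ι → ℕ) {μ w : Fin n → ℝ} {ν : ι → ℝ}
    (h : μ + w = ∑ j, (ν j * ε j) • a j) (r : Fin n → ℝ) :
    eLin μ (fun i => Complex.I * r i) * eLin w (fun i => Complex.I * r i) /
        ∏ j, (1 - eAff (a j) (c j) (fun i => Complex.I * r i)) ^ ε j =
      ∏ j, ((Real.exp (ν j * -(2 * π * (a j ⬝ᵥ r))) : ℂ) /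
        (1 - Complex.exp (2 * π * Complex.I * c j) * Real.exp (-(2 * π * (a j ⬝ᵥ r))))) ^ ε j := by
  have hexp : Real.exp (-(2 * π * (μ ⬝ᵥ r))) * Real.exp (-(2 * π * (w ⬝ᵥ r))) =
      ∏ j, Real.exp (ν j * -(2 * π * (a j ⬝ᵥ r))) ^ ε j := by
    simp only [← Real.exp_nat_mul, ← Real.exp_sum, ← Real.exp_add]
    rw [← neg_add, ← mul_add, ← add_dotProduct, h, sum_dotProduct, mul_sum, ← sum_neg_distrib]
    congr 1
    refine sum_congr rfl fun j _ => ?_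
    rw [smul_dotProduct, smul_eq_mul]
    ring
  rw [eLin_I_mul, eLin_I_mul, ← Complex.ofReal_mul, hexp, Complex.ofReal_prod]
  simp only [eAff_I_mul, div_pow, prod_div_distrib, Complex.ofReal_pow]

theorem exists_dotProduct_ne_zero_of_span_eq_top {R m : Type*} [CommRing R] [LinearOrder R]
    [IsStrictOrderedRing R] [Fintype m] {s : Set (m → R)} (hs : Submodule.span R s = ⊤)
    {v : m → R} (hv : v ≠ 0) : ∃ x ∈ s, x ⬝ᵥ v ≠ 0 := by
  by_contra! h
  have hvanish : (dotProductBilin R R).flip v = 0 := LinearMap.ext_on hs fun x hx => h x hx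
  exact hv (dotProduct_self_eq_zero.mp (LinearMap.congr_fun hvanish v))

theorem tendsto_affine_atBot_sup_atTop {p q : ℝ} (hq : q ≠ 0) :
    Tendsto (fun s : ℝ => p + s * q) atTop (atBot ⊔ atTop) := by
  rcases hq.lt_or_gt with hq | hq
  · exact (tendsto_atBot_add_const_left _ p (tendsto_id.atTop_mul_const_of_neg hq)).mono_right
      le_sup_left
  · exact (tendsto_atTop_add_const_left _ p (tendsto_id.atTop_mul_const hq)).mono_right
      le_sup_right

theorem tendsto_exp_mul_div_one_sub_mul_exp_atBot {ν : ℝ} (hν : 0 < ν) (β : ℂ) :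
    Tendsto (fun x : ℝ => (Real.exp (ν * x) : ℂ) / (1 - β * Real.exp x)) atBot (𝓝 0) := by
  have hexp : Tendsto (fun x : ℝ => (Real.exp x : ℂ)) atBot (𝓝 0) := by
    simpa only [Complex.ofReal_zero] using Real.tendsto_exp_atBot.ofReal
  have hnum : Tendsto (fun x : ℝ => (Real.exp (ν * x) : ℂ)) atBot (𝓝 0) :=
    hexp.comp (tendsto_id.const_mul_atBot hν)
  have hden : Tendsto (fun x : ℝ => 1 - β * Real.exp x) atBot (𝓝 1) := by
    simpa only [mul_zero, sub_zero] using (hexp.const_mul β).const_sub 1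
  rw [← zero_div (1 : ℂ)]
  exact hnum.div hden one_ne_zero

theorem tendsto_exp_mul_div_one_sub_mul_exp_atTop {ν : ℝ} (hν : ν < 1) {β : ℂ} (hβ : β ≠ 0) :
    Tendsto (fun x : ℝ => (Real.exp (ν * x) : ℂ) / (1 - β * Real.exp x)) atTop (𝓝 0) := by
  have hexp : Tendsto (fun x : ℝ => (Real.exp (-x) : ℂ)) atTop (𝓝 0) := by
    simpa only [Complex.ofReal_zero] using Real.tendsto_exp_neg_atTop_nhds_zero.ofReal
  have hnum : Tendsto (fun x : ℝ => (Real.exp (-((1 - ν) * x)) : ℂ)) atTop (𝓝 0) :=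
    hexp.comp (tendsto_id.const_mul_atTop (sub_pos.mpr hν))
  have hden : Tendsto (fun x : ℝ => (Real.exp (-x) : ℂ) - β) atTop (𝓝 (-β)) := by
    simpa only [zero_sub] using hexp.sub_const β
  have hlim := hnum.div hden (neg_ne_zero.mpr hβ)
  rw [zero_div] at hlim
  refine hlim.congr fun x => ?_
  have hx : (Real.exp x : ℂ) ≠ 0 := Complex.ofReal_ne_zero.mpr (Real.exp_pos x).ne'
  have hnum_eq : (Real.exp (ν * x) : ℂ) = Real.exp (-((1 - ν) * x)) * Real.exp x := by
    rw [← Complex.ofReal_mul, ← Real.exp_add]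
    ring_nf
  have hden_eq : 1 - β * Real.exp x = ((Real.exp (-x) : ℂ) - β) * Real.exp x := by
    rw [sub_mul, ← Complex.ofReal_mul, ← Real.exp_add, neg_add_cancel, Real.exp_zero,
      Complex.ofReal_one]
  rw [hnum_eq, hden_eq, mul_div_mul_right _ _ hx]
  rfl

theorem tendsto_exp_mul_div_one_sub_mul_exp {ν : ℝ} (hν₀ : 0 < ν) (hν₁ : ν < 1) {β : ℂ}
    (hβ : β ≠ 0) :
    Tendsto (fun x : ℝ => (Real.exp (ν * x) : ℂ) / (1 - β * Real.exp x)) (atBot ⊔ atTop)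
      (𝓝 0) :=
  (tendsto_exp_mul_div_one_sub_mul_exp_atBot hν₀ β).sup
    (tendsto_exp_mul_div_one_sub_mul_exp_atTop hν₁ hβ)

theorem tendsto_prod_pow_exp_mul_div_one_sub_mul_exp {n : ℕ} {ι : Type*} [Fintype ι]
    (a : ι → Fin n → ℝ) (β : ι → ℂ) (ε : ι → ℕ) {ν : ι → ℝ} (hν : ∀ j, 0 < ν j ∧ ν j < 1)
    (hβ : ∀ j, β j ≠ 0) (u : Fin n → ℝ) {v : Fin n → ℝ} {j₀ : ι} (hε₀ : ε j₀ ≠ 0)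
    (hj₀ : a j₀ ⬝ᵥ v ≠ 0) :
    Tendsto (fun s : ℝ => ∏ j, ((Real.exp (ν j * -(2 * π * (a j ⬝ᵥ (u + s • v)))) : ℂ) /
      (1 - β j * Real.exp (-(2 * π * (a j ⬝ᵥ (u + s • v)))))) ^ ε j) atTop (𝓝 0) := by
  set g : ι → ℝ → ℂ := fun j x => (Real.exp (ν j * x) : ℂ) / (1 - β j * Real.exp x)
  have haffine : ∀ j (s : ℝ), -(2 * π * (a j ⬝ᵥ (u + s • v))) =
      -(2 * π * (a j ⬝ᵥ u)) + s * -(2 * π * (a j ⬝ᵥ v)) := fun j s => by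
    rw [dotProduct_add, dotProduct_smul, smul_eq_mul]; ring
  have hfactor : ∀ j, ∃ L, Tendsto (fun s : ℝ => g j (-(2 * π * (a j ⬝ᵥ (u + s • v))))) atTop
      (𝓝 L) ∧ (a j ⬝ᵥ v ≠ 0 → L = 0) := by
    intro j
    simp only [haffine]
    by_cases hj : a j ⬝ᵥ v = 0
    · exact ⟨_, by simpa only [hj, mul_zero, neg_zero, add_zero] using tendsto_const_nhds,
        fun h => absurd hj h⟩
    · refine ⟨0, ?_, fun _ => rfl⟩
      exact (tendsto_exp_mul_div_one_sub_mul_exp (hν j).1 (hν j).2 (hβ j)).comp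
        (tendsto_affine_atBot_sup_atTop (by simp [Real.pi_ne_zero, hj]))
  choose L hL hL0 using hfactor
  have hprod := tendsto_finsetProd univ fun j _ => (hL j).pow (ε j)
  rwa [prod_eq_zero (mem_univ j₀) (by rw [hL0 j₀ hj₀, zero_pow hε₀])] at hprod

theorem decay_of_trig_rational_general {n : ℕ} {ι κ : Type*} [Fintype ι] [Fintype κ]
    (a : ι → Fin n → ℝ) (cst : ι → ℂ) (ε : ι → ℕ)
    (wvec : κ → Fin n → ℝ) (lam : κ → ℂ) (μ : Fin n → ℝ)
    (hspan : Submodule.span ℝ {x : Fin n → ℝ | ∃ j, ε j ≠ 0 ∧ x = a j} = ⊤)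
    (hzono : ∀ w : κ, lam w ≠ 0 → ∃ ν : ι → ℝ, (∀ j, 0 < ν j ∧ ν j < 1) ∧
      (fun i => μ i + wvec w i) = ∑ j, (ν j * ε j) • a j)
    (u v : Fin n → ℝ) (hv : v ≠ 0) :
    Filter.Tendsto
      (fun s : ℝ =>
        eLin μ (fun i => Complex.I * ((u i : ℂ) + s * v i)) *
          ((∑ w, lam w * eLin (wvec w) (fun i => Complex.I * ((u i : ℂ) + s * v i))) /
            ∏ j, (1 - eAff (a j) (cst j)
              (fun i => Complex.I * ((u i : ℂ) + s * v i))) ^ ε j))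
      Filter.atTop (nhds 0) := by
  obtain ⟨_, ⟨j₀, hε₀, rfl⟩, hj₀⟩ := exists_dotProduct_ne_zero_of_span_eq_top hspan hv
  have hterm : ∀ w, Tendsto (fun s : ℝ => lam w *
      (eLin μ (fun i => Complex.I * (u + s • v) i) *
        eLin (wvec w) (fun i => Complex.I * (u + s • v) i) /
          ∏ j, (1 - eAff (a j) (cst j) (fun i => Complex.I * (u + s • v) i)) ^ ε j))
      atTop (𝓝 0) := by
    intro w
    by_cases hw : lam w = 0
    · simpa only [hw, zero_mul] using tendsto_const_nhds
    obtain ⟨ν, hν, hsum⟩ := hzono w hw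
    simp only [eLin_mul_eLin_div_prod_eq_prod a cst ε hsum]
    simpa only [mul_zero] using (tendsto_prod_pow_exp_mul_div_one_sub_mul_exp a _ ε hν
      (fun j => Complex.exp_ne_zero _) u hε₀ hj₀).const_mul (lam w)
  have hsum := tendsto_finsetSum univ fun w _ => hterm w
  rw [sum_const_zero] at hsum
  refine hsum.congr fun s => ?_
  simp only [Pi.add_apply, Pi.smul_apply, smul_eq_mul, Complex.ofReal_add, Complex.ofReal_mul,
    sum_div, mul_sum]
  exact sum_congr rfl fun w _ => by ring

/-- Proposition 4.1 ('if' direction): if the linear parts of the forms occurring in the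
denominator span `(ℝⁿ)*` and `μ + w` lies in the open zonotope `D_ε` for every `w` with
`λ_w ≠ 0`, then `e_μ(i(u+sv)) f(i(u+sv)) → 0` as `s → +∞`, for every `u` not a pole of
`f` and every nonzero `v`. -/
theorem decay_of_trig_rational {n : ℕ} {ι κ : Type*} [Fintype ι] [Fintype κ]
    (a : ι → Fin n → ℝ) (cst : ι → ℂ) (ε : ι → ℕ)
    (wvec : κ → Fin n → ℝ) (lam : κ → ℂ) (μ : Fin n → ℝ)
    (hspan : Submodule.span ℝ {x : Fin n → ℝ | ∃ j, ε j ≠ 0 ∧ x = a j} = ⊤)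
    (hzono : ∀ w : κ, lam w ≠ 0 → ∃ ν : ι → ℝ, (∀ j, 0 < ν j ∧ ν j < 1) ∧
      (fun i => μ i + wvec w i) = ∑ j, (ν j * ε j) • a j)
    (u v : Fin n → ℝ) (hv : v ≠ 0)
    (hu : ∏ j, (1 - eAff (a j) (cst j) (fun i => Complex.I * (u i : ℂ))) ^ ε j ≠ 0) :
    Filter.Tendsto
      (fun s : ℝ =>
        eLin μ (fun i => Complex.I * ((u i : ℂ) + s * v i)) *
          ((∑ w, lam w * eLin (wvec w) (fun i => Complex.I * ((u i : ℂ) + s * v i))) /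
            ∏ j, (1 - eAff (a j) (cst j)
              (fun i => Complex.I * ((u i : ℂ) + s * v i))) ^ ε j))
      Filter.atTop (nhds 0) :=
  decay_of_trig_rational_general a cst ε wvec lam μ hspan hzono u v hv
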